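/- Let x, y ∈ ℝ^m, let B, B̃ ∈ ℝ^{m×s} with ‖B̃ - B‖_{1,2} ≤ ε̄, and let f satisfy the standard assumption. Then ‖R_{B̃}^f(x) - R_{B̃}^f(y)‖₂ ≥ √2 (σ([B, x, y]) - √s · ε̄). -/

import Mathlib

noncomputable section

open scoped BigOperators

abbrev E (m : ℕ) := EuclideanSpace ℝ (Fin m)

def toE {m : ℕ} (x : Fin m → ℝ) : E m := WithLp.toLp 2 x

/-- The unit simplex `Δ = {y | y ≥ 0, ∑ y ≤ 1}`. -/
def simplex (n : Type*) [Fintype n] : Set (n → ℝ) :=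
  {y | (∀ i, 0 ≤ y i) ∧ ∑ i, y i ≤ 1}

/-- Assumption 2 of the paper: `f` is `μ`-strongly convex with `L`-Lipschitz
gradient `f'`, and `0` is its global minimizer with `f 0 = 0`. -/
structure GoodF {m : ℕ} (f : E m → ℝ) (f' : E m → E m) (μ L : ℝ) : Prop where
  mu_pos : 0 < μ
  grad : ∀ x, HasGradientAt f (f' x) x
  lip : ∀ x y : E m, ‖f' x - f' y‖ ≤ L * ‖x - y‖
  sconv : ∀ x y : E m, ∀ δ : ℝ, 0 ≤ δ → δ ≤ 1 →
    f (δ • x + (1 - δ) • y) ≤ δ * f x + (1 - δ) * f y - μ / 2 * δ * (1 - δ) * ‖x - y‖ ^ 2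
  f_zero : f 0 = 0
  min_zero : ∀ x, f 0 ≤ f x

/-- A minimizer over the unit simplex of `y ↦ f (x - B y)` (chosen via choice). -/
def argminSimplex {m : ℕ} {n : Type*} [Fintype n] (f : E m → ℝ)
    (B : Matrix (Fin m) n ℝ) (x : E m) : n → ℝ :=
  Classical.epsilon fun y => y ∈ simplex n ∧
    ∀ z ∈ simplex n, f (x - toE (B.mulVec y)) ≤ f (x - toE (B.mulVec z))

/-- The residual `R_B^f(x) = x - B y*` where `y* = argmin_{y ∈ Δ} f (x - B y)`. -/
def resid {m : ℕ} {n : Type*} [Fintype n] (f : E m → ℝ)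
    (B : Matrix (Fin m) n ℝ) (x : E m) : E m :=
  x - toE (B.mulVec (argminSimplex f B x))

/-- Column-wise residual matrix `R_B^f(A)`. -/
def residMat {m : ℕ} {n k : Type*} [Fintype n] (f : E m → ℝ)
    (B : Matrix (Fin m) n ℝ) (A : Matrix (Fin m) k ℝ) : Matrix (Fin m) k ℝ :=
  fun i j => resid f B (toE fun i' => A i' j) i

/-- `‖N‖_{1,2}`: the maximum `ℓ₂` column norm. -/
def norm12 {m : ℕ} {n : Type*} [Fintype n] (N : Matrix (Fin m) n ℝ) : ℝ :=
  sSup {c | ∃ j, c = ‖toE fun i => N i j‖}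

/-- `α(W)`: minimum distance between a column of `W` and the convex hull of the
other columns of `W` and the origin. -/
def alpha {m r : ℕ} (W : Matrix (Fin m) (Fin r) ℝ) : ℝ :=
  sInf {c | ∃ (j : Fin r) (x : Fin r → ℝ), x ∈ simplex (Fin r) ∧ x j = 0 ∧
    c = ‖toE (fun i => W i j) - toE (W.mulVec x)‖}

/-- `σ(W)`: smallest singular value (`min_{‖z‖₂ ≥ 1} ‖Wz‖₂`) if `m ≥ r`, and `0` if `m < r`. -/
def smin {m r : ℕ} (W : Matrix (Fin m) (Fin r) ℝ) : ℝ :=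
  if r ≤ m then sInf {c | ∃ z : Fin r → ℝ, 1 ≤ ‖toE z‖ ∧ c = ‖toE (W.mulVec z)‖} else 0

/-- `[B, x]`: append the column `x` to `B`. -/
def appendCol {m s : ℕ} (B : Matrix (Fin m) (Fin s) ℝ) (x : E m) :
    Matrix (Fin m) (Fin (s + 1)) ℝ :=
  fun i => Fin.snoc (fun j => B i j) (x i)

/-- `[A, B]`: horizontal concatenation. -/
def appendMat {m k s : ℕ} (A : Matrix (Fin m) (Fin k) ℝ) (B : Matrix (Fin m) (Fin s) ℝ) :
    Matrix (Fin m) (Fin (k + s)) ℝ :=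
  fun i => Fin.append (fun j => A i j) (fun j => B i j)

/-- `ω(P) = min (min_i ‖p_i‖₂, (1/√2) min_{i ≠ j} ‖p_i - p_j‖₂)`. -/
def omegaM {m : ℕ} {k : Type*} [Fintype k] (P : Matrix (Fin m) k ℝ) : ℝ :=
  sInf ({c | ∃ i, c = ‖toE fun a => P a i‖} ∪
    {c | ∃ i j, i ≠ j ∧ c = (Real.sqrt 2)⁻¹ * ‖(toE fun a => P a i) - toE fun a => P a j‖})

/-- `β(W) = min (ν_β(W), γ_β(W)/√2)` as in the paper. -/
def beta {m r : ℕ} (f : E m → ℝ) (W : Matrix (Fin m) (Fin r) ℝ) : ℝ :=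
  sInf ({c | ∃ j : Fin r,
      c = ‖resid f (W.submatrix id fun p : {i // i ≠ j} => (p : Fin r)) (toE fun a => W a j)‖} ∪
    {c | ∃ (i j : Fin r) (J : Finset (Fin r)), i ≠ j ∧ i ∉ J ∧ j ∉ J ∧
      c = (Real.sqrt 2)⁻¹ *
        ‖resid f (W.submatrix id fun p : J => (p : Fin r)) (toE fun a => W a i) -
         resid f (W.submatrix id fun p : J => (p : Fin r)) (toE fun a => W a j)‖})

theorem Matrix.isHermitian_transpose_mul_self {m n : Type*} [Fintype m]
    (A : Matrix m n ℝ) : (A.transpose * A).IsHermitian := by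
  simpa using Matrix.isHermitian_conjTranspose_mul_self A

/-- Singular values of `B` in nonincreasing order (`i`-th largest at index `i`). -/
def singVals {m s : ℕ} (B : Matrix (Fin m) (Fin s) ℝ) : Fin s → ℝ := fun i =>
  Real.sqrt (((Matrix.isHermitian_transpose_mul_self B).eigenvalues ∘
    Tuple.sort (Matrix.isHermitian_transpose_mul_self B).eigenvalues) i.rev)

/-- The spectral norm `‖N‖₂` (ℓ₂ operator norm). -/
def spec {m s : ℕ} (N : Matrix (Fin m) (Fin s) ℝ) : ℝ :=
  ‖LinearMap.toContinuousLinearMap (Matrix.toEuclideanLin N)‖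

/-!
The difference `(x - B̃ z_x) - (y - B̃ z_y)` equals `[B̃, x, y] v` with `v = (z_y - z_x, 1, -1)`,
and `‖v‖ ≥ √2`, so `√2 σ([B̃, x, y]) ≤ ‖R(x) - R(y)‖`. The matrices `[B, x, y]` and `[B̃, x, y]`
differ only by `B̃ - B` in the first `s` columns, which changes `‖W v‖` by at most
`√s ‖B̃ - B‖_{1,2} ‖v‖` (Cauchy–Schwarz on the column expansion), and `σ` is `1`-Lipschitz
for such perturbations.
-/

open scoped Matrix

section Vectors

variable {m s : ℕ}

@[simp] lemma toE_apply (x : Fin m → ℝ) (i : Fin m) : toE x i = x i := rfl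

@[simp] lemma toE_sub (x y : Fin m → ℝ) : toE (x - y) = toE x - toE y := rfl

@[simp] lemma toE_smul (a : ℝ) (x : Fin m → ℝ) : toE (a • x) = a • toE x := rfl

lemma norm_toE_snoc_sq (w : Fin s → ℝ) (a : ℝ) :
    ‖toE (Fin.snoc w a : Fin (s + 1) → ℝ)‖ ^ 2 = ‖toE w‖ ^ 2 + a ^ 2 := by
  simp [EuclideanSpace.real_norm_sq_eq, Fin.sum_univ_castSucc]

lemma norm_toE_le_norm_toE_snoc (w : Fin s → ℝ) (a : ℝ) :
    ‖toE w‖ ≤ ‖toE (Fin.snoc w a : Fin (s + 1) → ℝ)‖ := by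
  refine (pow_le_pow_iff_left₀ (norm_nonneg _) (norm_nonneg _) two_ne_zero).mp ?_
  rw [norm_toE_snoc_sq]
  exact le_add_of_nonneg_right (sq_nonneg a)

lemma sum_abs_le_sqrt_mul_norm_toE (w : Fin s → ℝ) : ∑ j, |w j| ≤ √s * ‖toE w‖ := by
  have hsq : (∑ j, |w j|) ^ 2 ≤ s * ‖toE w‖ ^ 2 := by
    simpa [EuclideanSpace.real_norm_sq_eq] using
      sq_sum_le_card_mul_sum_sq (s := Finset.univ) (f := fun j => |w j|)
  rw [← Real.sqrt_sq (norm_nonneg (toE w)), ← Real.sqrt_mul (Nat.cast_nonneg s)]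
  exact Real.le_sqrt_of_sq_le hsq

end Vectors

section ColumnNorm

variable {m s : ℕ}

lemma norm12_nonneg {n : Type*} [Fintype n] (N : Matrix (Fin m) n ℝ) : 0 ≤ norm12 N :=
  Real.sSup_nonneg (by rintro _ ⟨j, rfl⟩; exact norm_nonneg _)

lemma norm_col_le_norm12 {n : Type*} [Fintype n] (N : Matrix (Fin m) n ℝ) (j : n) :
    ‖toE fun i => N i j‖ ≤ norm12 N :=
  le_csSup ((Set.finite_range fun j => ‖toE fun i => N i j‖).subset
    (by rintro _ ⟨j, rfl⟩; exact ⟨j, rfl⟩)).bddAbove ⟨j, rfl⟩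

lemma toE_mulVec_eq_sum (N : Matrix (Fin m) (Fin s) ℝ) (w : Fin s → ℝ) :
    toE (N *ᵥ w) = ∑ j, w j • toE fun i => N i j := by
  ext i
  simp [Matrix.mulVec, dotProduct, mul_comm]

lemma norm_toE_mulVec_le (N : Matrix (Fin m) (Fin s) ℝ) (w : Fin s → ℝ) :
    ‖toE (N *ᵥ w)‖ ≤ √s * norm12 N * ‖toE w‖ :=
  calc ‖toE (N *ᵥ w)‖ ≤ ∑ j, |w j| * ‖toE fun i => N i j‖ := by
        rw [toE_mulVec_eq_sum]
        refine (norm_sum_le _ _).trans_eq ?_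
        simp [norm_smul]
    _ ≤ ∑ j, |w j| * norm12 N := by
        gcongr with j; exact norm_col_le_norm12 N j
    _ ≤ √s * ‖toE w‖ * norm12 N := by
        rw [← Finset.sum_mul]
        exact mul_le_mul_of_nonneg_right (sum_abs_le_sqrt_mul_norm_toE w) (norm12_nonneg N)
    _ = √s * norm12 N * ‖toE w‖ := by ring

end ColumnNorm

section SmallestSingularValue

variable {m r : ℕ}

lemma smin_nonneg (W : Matrix (Fin m) (Fin r) ℝ) : 0 ≤ smin W := by
  unfold smin
  split_ifs
  · exact Real.sInf_nonneg (by rintro _ ⟨z, -, rfl⟩; exact norm_nonneg _)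
  · exact le_rfl

lemma smin_le_norm_mulVec (W : Matrix (Fin m) (Fin r) ℝ) {v : Fin r → ℝ}
    (hv : 1 ≤ ‖toE v‖) : smin W ≤ ‖toE (W *ᵥ v)‖ := by
  unfold smin
  split_ifs
  · exact csInf_le ⟨0, by rintro _ ⟨z, -, rfl⟩; exact norm_nonneg _⟩ ⟨v, hv, rfl⟩
  · exact norm_nonneg _

lemma smin_mul_norm_le (W : Matrix (Fin m) (Fin r) ℝ) (v : Fin r → ℝ) :
    smin W * ‖toE v‖ ≤ ‖toE (W *ᵥ v)‖ := by
  rcases eq_or_ne v 0 with rfl | hv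
  · simp [toE]
  have hpos : 0 < ‖toE v‖ := norm_pos_iff.mpr fun h => hv (congrArg WithLp.ofLp h)
  have hunit : 1 ≤ ‖toE (‖toE v‖⁻¹ • v)‖ := by
    rw [toE_smul, norm_smul, norm_inv, norm_norm, inv_mul_cancel₀ hpos.ne']
  have := smin_le_norm_mulVec W hunit
  rw [Matrix.mulVec_smul, toE_smul, norm_smul, norm_inv, norm_norm] at this
  rwa [le_inv_mul_iff₀ hpos, mul_comm] at this

lemma smin_le_smin_add {W W' : Matrix (Fin m) (Fin r) ℝ} {δ : ℝ} (hδ : 0 ≤ δ)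
    (h : ∀ v, ‖toE ((W' - W) *ᵥ v)‖ ≤ δ * ‖toE v‖) : smin W ≤ smin W' + δ := by
  have hle : ∀ v, 1 ≤ ‖toE v‖ → smin W - δ ≤ ‖toE (W' *ᵥ v)‖ := fun v hv => by
    have hW : ‖toE (W *ᵥ v)‖ ≤ ‖toE (W' *ᵥ v)‖ + δ * ‖toE v‖ := by
      have hsplit : toE (W *ᵥ v) = toE (W' *ᵥ v) - toE ((W' - W) *ᵥ v) := by
        rw [Matrix.sub_mulVec, toE_sub, sub_sub_cancel]
      rw [hsplit]
      exact (norm_sub_le _ _).trans (add_le_add_right (h v) _)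
    nlinarith [smin_mul_norm_le W v, norm_nonneg (toE (W' *ᵥ v))]
  rw [← sub_le_iff_le_add]
  unfold smin at hle ⊢
  split_ifs at hle ⊢ with hr
  · set S' := {c | ∃ z : Fin r → ℝ, 1 ≤ ‖toE z‖ ∧ c = ‖toE (W' *ᵥ z)‖}
    rcases S'.eq_empty_or_nonempty with hS' | hS'
    · -- only when `r = 0`: both infima are then `sInf ∅ = 0`
      have hS : {c | ∃ z : Fin r → ℝ, 1 ≤ ‖toE z‖ ∧ c = ‖toE (W *ᵥ z)‖} = ∅ :=
        Set.eq_empty_of_forall_notMem fun _ ⟨z, hz, _⟩ =>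
          (Set.eq_empty_iff_forall_notMem.mp hS') _ ⟨z, hz, rfl⟩
      rw [hS, hS', Real.sInf_empty]
      linarith
    · exact le_csInf hS' (by rintro _ ⟨v, hv, rfl⟩; exact hle v hv)
  · linarith

end SmallestSingularValue

section AppendColumn

variable {m s : ℕ}

lemma toE_appendCol_mulVec_snoc (A : Matrix (Fin m) (Fin s) ℝ) (u : E m) (w : Fin s → ℝ)
    (a : ℝ) : toE (appendCol A u *ᵥ Fin.snoc w a) = toE (A *ᵥ w) + a • u := by
  ext i
  simp [appendCol, Matrix.mulVec, dotProduct, Fin.sum_univ_castSucc, mul_comm]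

lemma norm_toE_appendCol_sub_mulVec_le {A A' : Matrix (Fin m) (Fin s) ℝ} (u : E m) {K : ℝ}
    (hK : 0 ≤ K) (h : ∀ w, ‖toE ((A' - A) *ᵥ w)‖ ≤ K * ‖toE w‖) (v : Fin (s + 1) → ℝ) :
    ‖toE ((appendCol A' u - appendCol A u) *ᵥ v)‖ ≤ K * ‖toE v‖ := by
  obtain ⟨w, a, rfl⟩ : ∃ w a, v = Fin.snoc w a := ⟨Fin.init v, v (Fin.last s), by simp⟩
  rw [Matrix.sub_mulVec, toE_sub, toE_appendCol_mulVec_snoc, toE_appendCol_mulVec_snoc,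
    add_sub_add_right_eq_sub, ← toE_sub, ← Matrix.sub_mulVec]
  exact (h w).trans (mul_le_mul_of_nonneg_left (norm_toE_le_norm_toE_snoc w a) hK)

lemma smin_appendCol_appendCol_le (B Bt : Matrix (Fin m) (Fin s) ℝ) (x y : E m) :
    smin (appendCol (appendCol B x) y) ≤
      smin (appendCol (appendCol Bt x) y) + √s * norm12 (Bt - B) := by
  have hK : 0 ≤ √s * norm12 (Bt - B) := mul_nonneg (Real.sqrt_nonneg _) (norm12_nonneg _)
  exact smin_le_smin_add hK <| norm_toE_appendCol_sub_mulVec_le y hK <|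
    norm_toE_appendCol_sub_mulVec_le x hK (norm_toE_mulVec_le (Bt - B))

lemma sqrt_two_mul_smin_le_norm_sub (A : Matrix (Fin m) (Fin s) ℝ) (u u' : E m)
    (z z' : Fin s → ℝ) :
    √2 * smin (appendCol (appendCol A u) u') ≤ ‖(u - toE (A *ᵥ z)) - (u' - toE (A *ᵥ z'))‖ := by
  set v : Fin (s + 1 + 1) → ℝ := Fin.snoc (Fin.snoc (z' - z) 1) (-1)
  have hv : √2 ≤ ‖toE v‖ := by
    refine Real.sqrt_le_iff.mpr ⟨norm_nonneg _, ?_⟩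
    rw [norm_toE_snoc_sq, norm_toE_snoc_sq]
    nlinarith [sq_nonneg ‖toE (z' - z)‖]
  have hWv : toE (appendCol (appendCol A u) u' *ᵥ v) =
      (u - toE (A *ᵥ z)) - (u' - toE (A *ᵥ z')) := by
    rw [toE_appendCol_mulVec_snoc, toE_appendCol_mulVec_snoc, Matrix.mulVec_sub, toE_sub]
    module
  calc √2 * smin (appendCol (appendCol A u) u')
      ≤ smin (appendCol (appendCol A u) u') * ‖toE v‖ := by
        rw [mul_comm]; exact mul_le_mul_of_nonneg_left hv (smin_nonneg _)
    _ ≤ _ := hWv ▸ smin_mul_norm_le _ v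

end AppendColumn

theorem stmt10_general (m s : ℕ) (f : E m → ℝ)
    (B Bt : Matrix (Fin m) (Fin s) ℝ) (eps : ℝ) (hN : norm12 (Bt - B) ≤ eps)
    (x y : E m) :
    Real.sqrt 2 * (smin (appendCol (appendCol B x) y) - Real.sqrt (s : ℝ) * eps) ≤
      ‖resid f Bt x - resid f Bt y‖ :=
  calc √2 * (smin (appendCol (appendCol B x) y) - √s * eps)
      ≤ √2 * smin (appendCol (appendCol Bt x) y) := by
        gcongr
        linarith [smin_appendCol_appendCol_le B Bt x y,
          mul_le_mul_of_nonneg_left hN (Real.sqrt_nonneg s)]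
    _ ≤ ‖resid f Bt x - resid f Bt y‖ := sqrt_two_mul_smin_le_norm_sub Bt x y _ _

theorem stmt10 (m s : ℕ) (μ L : ℝ) (f : E m → ℝ) (f' : E m → E m) (hf : GoodF f f' μ L)
    (B Bt : Matrix (Fin m) (Fin s) ℝ) (eps : ℝ) (hN : norm12 (Bt - B) ≤ eps)
    (x y : E m) :
    Real.sqrt 2 * (smin (appendCol (appendCol B x) y) - Real.sqrt (s : ℝ) * eps) ≤
      ‖resid f Bt x - resid f Bt y‖ :=
  stmt10_general m s f B Bt eps hN x y
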